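/- Let p be prime and n ≥ 1 with l = max{t : p^t ≤ s_p(n)}. Then the p-adic valuation of D_n = lcm{ k · j_1!···j_k! : j_i ≥ 1, j_1+...+j_k = n, 1 ≤ k ≤ n } equals v_p(n!) + l. -/

import Mathlib

/-- base-p digit sum -/
def sp (p n : ℕ) : ℕ := (Nat.digits p n).sum

/-- `D n` : the lcm of `k * j₁! ⋯ jₖ!` over all compositions of `n` into `k ≥ 1` positive parts. -/
def Dn (n : ℕ) : ℕ :=
  (Finset.Icc 1 n).lcm fun k =>
    (((Finset.Nat.antidiagonalTuple k n).filter fun j => ∀ i, 1 ≤ j i).lcm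
      fun j => k * ∏ i, Nat.factorial (j i))

/-!
By Legendre's formula, `(p - 1) · v_p(multinomial j) = ∑ s_p(j_i) - s_p(n)` for a composition `j`
of `n`, and `v_p(k · ∏ j_i!) = v_p(k) + v_p(n!) - v_p(multinomial j)`. If `j` has `k` parts then
`∑ s_p(j_i) ≥ k ≥ p ^ v_p(k)`, while `s_p(n) < p ^ (l + 1)`; Bernoulli's inequality turns this into
`v_p(k) ≤ l + v_p(multinomial j)`, which is the upper bound. Conversely, since `p ^ l ≤ s_p(n)`,
`n` splits into `p ^ l` parts whose digit sums add up to `s_p(n)` (no carries), and this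
composition attains `v_p(n!) + l`.
-/

open Nat Finset

section DigitSum

variable {p : ℕ}

@[simp]
lemma sp_zero (p : ℕ) : sp p 0 = 0 := by
  simp [sp]

lemma sp_add_base_mul (hp : 1 < p) {r : ℕ} (hr : r < p) (q : ℕ) :
    sp p (r + p * q) = r + sp p q := by
  by_cases h : r = 0 ∧ q = 0
  · simp [h.1, h.2]
  · rw [sp, Nat.digits_add p hp r q hr (by tauto), List.sum_cons, sp]

lemma sp_base_mul (hp : 1 < p) (q : ℕ) : sp p (p * q) = sp p q := by
  simpa using sp_add_base_mul hp (by omega : 0 < p) q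

lemma sp_one (hp : 1 < p) : sp p 1 = 1 := by
  simpa using sp_add_base_mul hp hp 0

lemma exists_add_eq_sp_eq_one (hp : 1 < p) {n : ℕ} (hn : 2 ≤ sp p n) :
    ∃ a b, a + b = n ∧ sp p a = 1 ∧ sp p b + 1 = sp p n := by
  induction n using Nat.strong_induction_on with
  | _ n ih =>
  obtain ⟨r, q, hr, rfl⟩ : ∃ r q, r < p ∧ n = r + p * q :=
    ⟨n % p, n / p, Nat.mod_lt _ (by omega), (Nat.mod_add_div n p).symm⟩
  rw [sp_add_base_mul hp hr] at hn ⊢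
  rcases Nat.eq_zero_or_pos r with rfl | hr0
  · have hq : q ≠ 0 := by rintro rfl; simp at hn
    obtain ⟨a, b, rfl, ha, hb⟩ := ih q (by nlinarith [Nat.pos_of_ne_zero hq]) (by omega)
    exact ⟨p * a, p * b, by ring, by rw [sp_base_mul hp, ha], by rw [sp_base_mul hp]; omega⟩
  · refine ⟨1, (r - 1) + p * q, by omega, sp_one hp, ?_⟩
    rw [sp_add_base_mul hp (by omega)]
    omega

lemma exists_composition_sum_sp_eq (hp : 1 < p) {n k : ℕ} (hk : 1 ≤ k) (hkn : k ≤ sp p n) :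
    ∃ j : Fin k → ℕ, (∀ i, 1 ≤ j i) ∧ ∑ i, j i = n ∧ ∑ i, sp p (j i) = sp p n := by
  induction k, hk using Nat.le_induction generalizing n with
  | base =>
    have hn : n ≠ 0 := by rintro rfl; simp at hkn
    exact ⟨fun _ => n, fun _ => Nat.one_le_iff_ne_zero.mpr hn, by simp, by simp⟩
  | succ k hk ih =>
    obtain ⟨a, b, rfl, ha, hb⟩ := exists_add_eq_sp_eq_one hp (by omega : 2 ≤ sp p n)
    obtain ⟨j, hj, hjsum, hjsp⟩ := ih (n := b) (by omega)
    have ha0 : 1 ≤ a := Nat.one_le_iff_ne_zero.mpr (by rintro rfl; simp at ha)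
    refine ⟨Fin.cons a j, Fin.cases ha0 hj, ?_, ?_⟩ <;>
      simp only [Fin.sum_univ_succ, Fin.cons_zero, Fin.cons_succ] <;> omega

end DigitSum

section Valuation

variable {p : ℕ} [hp : Fact p.Prime]

lemma padicValNat_finset_prod {ι : Type*} {s : Finset ι} {f : ι → ℕ} (hf : ∀ i ∈ s, f i ≠ 0) :
    padicValNat p (∏ i ∈ s, f i) = ∑ i ∈ s, padicValNat p (f i) := by
  simp_rw [← Nat.factorization_def _ hp.out]
  rw [Nat.factorization_prod hf, Finsupp.finsetSum_apply]

lemma padicValNat_finset_lcm {ι : Type*} {s : Finset ι} {f : ι → ℕ} (hf : ∀ i ∈ s, f i ≠ 0) :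
    padicValNat p (s.lcm f) = s.sup fun i => padicValNat p (f i) := by
  simp_rw [← Nat.factorization_def _ hp.out]
  exact Finset.factorization_lcm hf p

lemma sub_one_mul_padicValNat_factorial_add_sp (n : ℕ) :
    (p - 1) * padicValNat p n ! + sp p n = n := by
  rw [sub_one_mul_padicValNat_factorial]
  exact Nat.sub_add_cancel (Nat.digit_sum_le p n)

lemma sp_pos {n : ℕ} (hn : n ≠ 0) : 0 < sp p n := by
  have := sub_one_mul_padicValNat_factorial_lt_of_ne_zero (p := p) hn
  have := sub_one_mul_padicValNat_factorial_add_sp (p := p) n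
  omega

lemma padicValNat_prod_factorial_add_multinomial {ι : Type*} (s : Finset ι) (f : ι → ℕ) :
    ∑ i ∈ s, padicValNat p (f i)! + padicValNat p (multinomial s f) =
      padicValNat p (∑ i ∈ s, f i)! := by
  rw [← multinomial_spec, padicValNat.mul (prod_ne_zero_iff.mpr fun i _ => factorial_ne_zero _)
    (multinomial_pos s f).ne', padicValNat_finset_prod fun i _ => factorial_ne_zero _]

lemma sub_one_mul_padicValNat_multinomial_add_sp {ι : Type*} (s : Finset ι) (f : ι → ℕ) :
    (p - 1) * padicValNat p (multinomial s f) + sp p (∑ i ∈ s, f i) = ∑ i ∈ s, sp p (f i) := by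
  have hsum := sub_one_mul_padicValNat_factorial_add_sp (p := p) (∑ i ∈ s, f i)
  have hparts : ∑ i ∈ s, ((p - 1) * padicValNat p (f i)! + sp p (f i)) = ∑ i ∈ s, f i :=
    sum_congr rfl fun i _ => sub_one_mul_padicValNat_factorial_add_sp (f i)
  rw [sum_add_distrib, ← mul_sum] at hparts
  rw [← padicValNat_prod_factorial_add_multinomial, mul_add] at hsum
  linarith

lemma padicValNat_mul_prod_factorial_add_multinomial {ι : Type*} {k : ℕ} (hk : k ≠ 0)
    (s : Finset ι) (f : ι → ℕ) :
    padicValNat p (k * ∏ i ∈ s, (f i)!) + padicValNat p (multinomial s f) =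
      padicValNat p k + padicValNat p (∑ i ∈ s, f i)! := by
  rw [padicValNat.mul hk (prod_ne_zero_iff.mpr fun i _ => factorial_ne_zero _),
    padicValNat_finset_prod fun i _ => factorial_ne_zero _, add_assoc,
    padicValNat_prod_factorial_add_multinomial]

end Valuation

lemma le_add_of_pow_le_sub_one_mul_add {p m l c s : ℕ} (hp : 0 < p)
    (h : p ^ m ≤ (p - 1) * c + s) (hs : s < p ^ (l + 1)) : m ≤ l + c := by
  by_contra! hlt
  have hbernoulli : 1 + c * (p - 1) ≤ p ^ c := by
    have := one_add_le_pow_of_two_add_nonneg (a := p - 1) (by omega) c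
    rwa [Nat.cast_id, show 1 + (p - 1) = p by omega] at this
  have hpow : p ^ (l + 1) * p ^ c ≤ p ^ m := by
    rw [← pow_add]
    exact Nat.pow_le_pow_right hp (by omega)
  nlinarith [Nat.one_le_pow (l + 1) p hp, Nat.zero_le (c * (p - 1))]

section Composition

variable {p : ℕ} [hp : Fact p.Prime]

lemma padicValNat_mul_prod_factorial_le {k n : ℕ} (j : Fin k → ℕ) (hj : ∀ i, 1 ≤ j i)
    (hsum : ∑ i, j i = n) :
    padicValNat p (k * ∏ i, (j i)!) ≤ padicValNat p n ! + Nat.log p (sp p n) := by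
  rcases eq_or_ne k 0 with rfl | hk
  · simp
  have hval := padicValNat_mul_prod_factorial_add_multinomial (p := p) hk univ j
  have hlegendre := sub_one_mul_padicValNat_multinomial_add_sp (p := p) univ j
  rw [hsum] at hval hlegendre
  have hk_le : k ≤ ∑ i, sp p (j i) := by
    simpa using card_nsmul_le_sum univ (fun i => sp p (j i)) 1 fun i _ =>
      sp_pos (Nat.one_le_iff_ne_zero.mp (hj i))
  have hpow : p ^ padicValNat p k ≤ k := Nat.le_of_dvd (by omega) pow_padicValNat_dvd
  have := le_add_of_pow_le_sub_one_mul_add hp.out.pos (hpow.trans (hk_le.trans hlegendre.ge))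
    (Nat.lt_pow_succ_log_self hp.out.one_lt (sp p n))
  omega

lemma padicValNat_mul_prod_factorial_of_sum_sp_eq {k n : ℕ} (hk : k ≠ 0) (j : Fin k → ℕ)
    (hsum : ∑ i, j i = n) (hsp : ∑ i, sp p (j i) = sp p n) :
    padicValNat p (k * ∏ i, (j i)!) = padicValNat p k + padicValNat p n ! := by
  have hval := padicValNat_mul_prod_factorial_add_multinomial (p := p) hk univ j
  have hlegendre := sub_one_mul_padicValNat_multinomial_add_sp (p := p) univ j
  rw [hsum] at hval hlegendre
  have : padicValNat p (multinomial univ j) = 0 := by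
    have := hp.out.two_le
    rw [hsp] at hlegendre
    simpa [show p - 1 ≠ 0 by omega] using hlegendre
  omega

lemma padicValNat_Dn_eq_sup (n : ℕ) :
    padicValNat p (Dn n) = (Icc 1 n).sup fun k =>
      ((Nat.antidiagonalTuple k n).filter fun j => ∀ i, 1 ≤ j i).sup fun j =>
        padicValNat p (k * ∏ i, (j i)!) := by
  have hterm_ne : ∀ k ∈ Icc 1 n, ∀ j : Fin k → ℕ, k * ∏ i, (j i)! ≠ 0 := fun k hk j =>
    mul_ne_zero (Nat.one_le_iff_ne_zero.mp (mem_Icc.mp hk).1)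
      (prod_ne_zero_iff.mpr fun i _ => factorial_ne_zero _)
  rw [Dn, padicValNat_finset_lcm fun k hk => ?_]
  · exact sup_congr rfl fun k hk => padicValNat_finset_lcm fun j _ => hterm_ne k hk j
  · simp only [Ne, Finset.lcm_eq_zero_iff, not_exists, not_and]
    exact fun j _ => hterm_ne k hk j

end Composition

theorem padicValNat_Dn (p : ℕ) (hp : p.Prime) (n : ℕ) (hn : 1 ≤ n)
    (l : ℕ) (hl : l = Nat.log p (sp p n)) :
    padicValNat p (Dn n) = padicValNat p n.factorial + l := by
  have : Fact p.Prime := ⟨hp⟩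
  rw [padicValNat_Dn_eq_sup]
  apply le_antisymm
  · refine Finset.sup_le fun k _ => Finset.sup_le fun j hj => ?_
    rw [mem_filter, Nat.mem_antidiagonalTuple] at hj
    exact hl ▸ padicValNat_mul_prod_factorial_le j hj.2 hj.1
  · have hpl : p ^ l ≤ sp p n := hl ▸ Nat.pow_log_le_self p (sp_pos (by omega)).ne'
    obtain ⟨j, hj, hsum, hsp⟩ :=
      exists_composition_sum_sp_eq hp.one_lt (Nat.one_le_pow _ _ hp.pos) hpl
    have hk : p ^ l ∈ Icc 1 n :=
      mem_Icc.mpr ⟨Nat.one_le_pow _ _ hp.pos, hpl.trans (Nat.digit_sum_le p n)⟩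
    refine le_sup_of_le hk (le_sup_of_le (b := j) (mem_filter.mpr ⟨?_, hj⟩) ?_)
    · exact Nat.mem_antidiagonalTuple.mpr hsum
    · rw [padicValNat_mul_prod_factorial_of_sum_sp_eq (pow_pos hp.pos _).ne' j hsum hsp,
        padicValNat.prime_pow, add_comm]
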